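/- arXiv:2408.00947 — 4 statements merged into one kernel-verified Lean document; each statement's English description precedes it below -/
import Mathlib

section
/- Let ν > 1/6 and θ ∈ (0,1), and let f(x) = ν x(1−x)(x−θ). Then there exists a constant C > 0, depending only on ν and θ, such that for all continuously differentiable functions u, v : [0,1] → ℝ with u(0) = u(1) = v(0) = v(1) = 0, one has ∫₀¹ (u(x)−v(x))·(u(x)u′(x) − v(x)v′(x)) dx + ∫₀¹ (u(x)−v(x))·(f(u(x)) − f(v(x))) dx ≤ (1/2) ∫₀¹ (u′(x)−v′(x))² dx + C ∫₀¹ (u(x)−v(x))² dx. -/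
/-!
Integrating by parts with `w = u - v` turns the Burgers term into `-½ ∫ w' (u² - v²)`, and
Young's inequality bounds its integrand by `½ w'² + ⅛ (u + v)² w²`. Writing
`(a - b)(f a - f b) = ν q(a, b) (a - b)²`, with `q(a, b) ≤ -¾ (a + b)² + (1 + θ)(a + b) - θ`,
the remaining coefficient `⅛ s² + ν q` of `w²` is at most `(⅛ - ¾ν) s² + ν (1 + θ) s - ν θ` with
`s = u + v`, a concave quadratic because `ν > 1/6`, hence bounded above by a constant.
-/

open Set intervalIntegral

noncomputable section

def huxley (ν θ x : ℝ) : ℝ := ν * x * (1 - x) * (x - θ)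

/-- The maximum over `s` of `(1/8 - 3ν/4) s² + ν (1 + θ) s - ν θ`. -/
def huxleyConst (ν θ : ℝ) : ℝ := (ν * (1 + θ)) ^ 2 / (3 * ν - 1 / 2) - ν * θ

end

section Huxley

variable {ν θ : ℝ}

@[fun_prop]
theorem continuous_huxley : Continuous (huxley ν θ) := by
  unfold huxley; fun_prop

theorem huxleyConst_pos (hν : 1 / 6 < ν) : 0 < huxleyConst ν θ := by
  have hA : 0 < 3 * ν - 1 / 2 := by linarith
  have hq : 0 < 1 - θ + θ ^ 2 := by nlinarith [sq_nonneg (θ - 1 / 2)]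
  have key : 0 < ν * ((ν - 1 / 6) * (1 - θ + θ ^ 2) + (1 + θ) ^ 2 / 6) := by
    have := mul_pos (sub_pos.2 hν) hq
    positivity
  rw [huxleyConst, sub_pos, lt_div_iff₀ hA]
  linarith

theorem sub_mul_huxley_sub (a b : ℝ) :
    (a - b) * (huxley ν θ a - huxley ν θ b) =
      ν * (-(a ^ 2 + a * b + b ^ 2) + (1 + θ) * (a + b) - θ) * (a - b) ^ 2 := by
  unfold huxley; ring

theorem huxley_slope_le (hν : 1 / 6 < ν) (a b : ℝ) :
    (a + b) ^ 2 / 8 + ν * (-(a ^ 2 + a * b + b ^ 2) + (1 + θ) * (a + b) - θ) ≤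
      huxleyConst ν θ := by
  have hA : 0 < 3 * ν - 1 / 2 := by linarith
  have hsq : 3 / 4 * (a + b) ^ 2 ≤ a ^ 2 + a * b + b ^ 2 := by nlinarith [sq_nonneg (a - b)]
  have hmax : -(3 * ν - 1 / 2) / 4 * (a + b) ^ 2 + ν * (1 + θ) * (a + b) ≤
      (ν * (1 + θ)) ^ 2 / (3 * ν - 1 / 2) := by
    rw [le_div_iff₀ hA]
    nlinarith [sq_nonneg ((3 * ν - 1 / 2) * (a + b) - 2 * ν * (1 + θ))]
  unfold huxleyConst
  nlinarith [mul_le_mul_of_nonneg_left hsq (by linarith : (0 : ℝ) ≤ ν)]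

theorem burgers_huxley_pointwise_le (hν : 1 / 6 < ν) (a b p : ℝ) :
    -(p * ((a ^ 2 - b ^ 2) / 2)) + (a - b) * (huxley ν θ a - huxley ν θ b) ≤
      1 / 2 * p ^ 2 + huxleyConst ν θ * (a - b) ^ 2 := by
  have young : -(p * ((a ^ 2 - b ^ 2) / 2)) ≤ 1 / 2 * p ^ 2 + (a + b) ^ 2 / 8 * (a - b) ^ 2 := by
    nlinarith [sq_nonneg (2 * p + (a + b) * (a - b))]
  have slope := mul_le_mul_of_nonneg_right (huxley_slope_le (θ := θ) hν a b) (sq_nonneg (a - b))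
  rw [sub_mul_huxley_sub]
  linarith

end Huxley

theorem integral_sub_mul_burgers_sub {u v : ℝ → ℝ} {a b : ℝ} (hab : a < b)
    (hu : ContDiffOn ℝ 1 u (Icc a b)) (hv : ContDiffOn ℝ 1 v (Icc a b))
    (ha : u a = v a) (hb : u b = v b) :
    ∫ x in a..b, (u x - v x) *
        (u x * derivWithin u (Icc a b) x - v x * derivWithin v (Icc a b) x) =
      -∫ x in a..b, (derivWithin u (Icc a b) x - derivWithin v (Icc a b) x) *
        ((u x ^ 2 - v x ^ 2) / 2) := by
  set u' := derivWithin u (Icc a b)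
  set v' := derivWithin v (Icc a b)
  have hI : uIcc a b = Icc a b := uIcc_of_le hab.le
  have hu' : ∀ x ∈ Icc a b, HasDerivWithinAt u (u' x) (Icc a b) x := fun x hx =>
    (hu.differentiableOn one_ne_zero x hx).hasDerivWithinAt
  have hv' : ∀ x ∈ Icc a b, HasDerivWithinAt v (v' x) (Icc a b) x := fun x hx =>
    (hv.differentiableOn one_ne_zero x hx).hasDerivWithinAt
  have hu'c := hu.continuousOn_derivWithin (uniqueDiffOn_Icc hab) le_rfl
  have hv'c := hv.continuousOn_derivWithin (uniqueDiffOn_Icc hab) le_rfl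
  have hparts := integral_mul_deriv_eq_deriv_mul_of_hasDerivWithinAt
    (u := fun x => u x - v x) (v := fun x => (u x ^ 2 - v x ^ 2) / 2)
    (u' := fun x => u' x - v' x) (v' := fun x => u x * u' x - v x * v' x)
    (by rw [hI]; exact fun x hx => (hu' x hx).sub (hv' x hx))
    (by
      rw [hI]; intro x hx
      convert (((hu' x hx).fun_pow 2).fun_sub ((hv' x hx).fun_pow 2)).div_const 2 using 1
      ring)
    ((hu'c.sub hv'c).intervalIntegrable_of_Icc hab.le)
    (((hu.continuousOn.mul hu'c).sub (hv.continuousOn.mul hv'c)).intervalIntegrable_of_Icc hab.le)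
  simpa [ha, hb] using hparts

theorem stmt0_general (ν θ : ℝ) (hν : 1/6 < ν)
    (f : ℝ → ℝ) (hf : ∀ x, f x = ν * x * (1 - x) * (x - θ)) :
    ∃ C : ℝ, 0 < C ∧ ∀ u v : ℝ → ℝ,
      ContDiffOn ℝ 1 u (Set.Icc 0 1) → ContDiffOn ℝ 1 v (Set.Icc 0 1) →
      u 0 = 0 → u 1 = 0 → v 0 = 0 → v 1 = 0 →
      (∫ x in (0:ℝ)..1, (u x - v x) *
          (u x * derivWithin u (Set.Icc 0 1) x - v x * derivWithin v (Set.Icc 0 1) x)) +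
        (∫ x in (0:ℝ)..1, (u x - v x) * (f (u x) - f (v x))) ≤
      (1/2) * (∫ x in (0:ℝ)..1,
          (derivWithin u (Set.Icc 0 1) x - derivWithin v (Set.Icc 0 1) x)^2) +
        C * (∫ x in (0:ℝ)..1, (u x - v x)^2) := by
  obtain rfl : f = huxley ν θ := funext hf
  refine ⟨huxleyConst ν θ, huxleyConst_pos hν, fun u v hu hv hu0 hu1 hv0 hv1 => ?_⟩
  rw [integral_sub_mul_burgers_sub zero_lt_one hu hv (hu0.trans hv0.symm) (hu1.trans hv1.symm)]
  set u' := derivWithin u (Icc 0 1)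
  set v' := derivWithin v (Icc 0 1)
  have hu'c : ContinuousOn u' (Icc 0 1) :=
    hu.continuousOn_derivWithin (uniqueDiffOn_Icc zero_lt_one) le_rfl
  have hv'c : ContinuousOn v' (Icc 0 1) :=
    hv.continuousOn_derivWithin (uniqueDiffOn_Icc zero_lt_one) le_rfl
  have huc := hu.continuousOn
  have hvc := hv.continuousOn
  have integrable {g : ℝ → ℝ} (hg : ContinuousOn g (Icc 0 1)) :
      IntervalIntegrable g MeasureTheory.volume 0 1 := hg.intervalIntegrable_of_Icc zero_le_one
  have hburgers := integrable (g := fun x => -((u' x - v' x) * ((u x ^ 2 - v x ^ 2) / 2)))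
    (by fun_prop)
  have hreaction :=
    integrable (g := fun x => (u x - v x) * (huxley ν θ (u x) - huxley ν θ (v x))) (by fun_prop)
  have hgrad := integrable (g := fun x => (u' x - v' x) ^ 2) (by fun_prop)
  have hdiff := integrable (g := fun x => (u x - v x) ^ 2) (by fun_prop)
  calc _ = ∫ x in (0:ℝ)..1, -((u' x - v' x) * ((u x ^ 2 - v x ^ 2) / 2)) +
          (u x - v x) * (huxley ν θ (u x) - huxley ν θ (v x)) := by
        rw [integral_add hburgers hreaction, integral_neg]
    _ ≤ ∫ x in (0:ℝ)..1, 1 / 2 * (u' x - v' x) ^ 2 + huxleyConst ν θ * (u x - v x) ^ 2 :=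
        integral_mono_on zero_le_one (hburgers.add hreaction)
          ((hgrad.const_mul _).add (hdiff.const_mul _))
          fun x _ => burgers_huxley_pointwise_le hν (u x) (v x) (u' x - v' x)
    _ = _ := by rw [integral_add (hgrad.const_mul _) (hdiff.const_mul _), integral_const_mul,
          integral_const_mul]

/-- Generalized monotonicity (Lemma 2.1): for `ν > 1/6`, `θ ∈ (0,1)` and the Huxley
nonlinearity `f x = ν x (1-x) (x-θ)`, there is `C > 0` (depending only on `ν, θ`) such that
for all `C¹` functions `u v : [0,1] → ℝ` vanishing at the endpoints,
`∫₀¹ (u-v)(u u' - v v') + ∫₀¹ (u-v)(f∘u - f∘v) ≤ (1/2)∫₀¹ (u'-v')² + C ∫₀¹ (u-v)²`. -/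
theorem stmt0 (ν θ : ℝ) (hν : 1/6 < ν) (hθ : θ ∈ Set.Ioo (0:ℝ) 1)
    (f : ℝ → ℝ) (hf : ∀ x, f x = ν * x * (1 - x) * (x - θ)) :
    ∃ C : ℝ, 0 < C ∧ ∀ u v : ℝ → ℝ,
      ContDiffOn ℝ 1 u (Set.Icc 0 1) → ContDiffOn ℝ 1 v (Set.Icc 0 1) →
      u 0 = 0 → u 1 = 0 → v 0 = 0 → v 1 = 0 →
      (∫ x in (0:ℝ)..1, (u x - v x) *
          (u x * derivWithin u (Set.Icc 0 1) x - v x * derivWithin v (Set.Icc 0 1) x)) +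
        (∫ x in (0:ℝ)..1, (u x - v x) * (f (u x) - f (v x))) ≤
      (1/2) * (∫ x in (0:ℝ)..1,
          (derivWithin u (Set.Icc 0 1) x - derivWithin v (Set.Icc 0 1) x)^2) +
        C * (∫ x in (0:ℝ)..1, (u x - v x)^2) :=
  stmt0_general ν θ hν f hf
end

section
/- For every ς ≥ 0 there exists a constant C > 0 such that for every t > 0 and every continuous function u : [0,1] → ℝ, Σ_{k=1}^∞ (k²π²)^{ς+1} · e^{−2t k²π²} · (∫₀¹ u(y)² cos(kπy) dy)² ≤ C · t^{−(ς+1)} · ∫₀¹ u(y)⁴ dy. -/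
open Real MeasureTheory intervalIntegral Finset

private lemma expBound (s : ℝ) (hs : 0 ≤ s) :
    ∃ K : ℝ, 1 ≤ K ∧ ∀ x : ℝ, 0 ≤ x → x ^ s * Real.exp (-2 * x) ≤ K := by
  set n := ⌈s⌉₊ with hn
  refine ⟨max 1 (n.factorial : ℝ), le_max_left _ _, fun x hx => ?_⟩
  rcases le_or_gt x 1 with hx1 | hx1
  · calc x ^ s * Real.exp (-2 * x) ≤ 1 * 1 := by
          apply mul_le_mul (Real.rpow_le_one hx hx1 hs)
            (Real.exp_le_one_iff.mpr (by linarith)) (Real.exp_nonneg _)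
            zero_le_one
      _ ≤ max 1 (n.factorial : ℝ) := by rw [mul_one]; exact le_max_left _ _
  · have h1 : x ^ s ≤ x ^ (n : ℝ) :=
      Real.rpow_le_rpow_of_exponent_le hx1.le (Nat.le_ceil s)
    have h2 : x ^ (n : ℝ) = x ^ n := Real.rpow_natCast x n
    have h3 : x ^ n ≤ (n.factorial : ℝ) * Real.exp x := by
      have h := Real.pow_div_factorial_le_exp x hx n
      have hf : (0:ℝ) < (n.factorial : ℝ) := by exact_mod_cast n.factorial_pos
      rw [div_le_iff₀ hf] at h
      linarith [h]
    calc x ^ s * Real.exp (-2 * x)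
        ≤ ((n.factorial : ℝ) * Real.exp x) * Real.exp (-2 * x) := by
          apply mul_le_mul_of_nonneg_right _ (Real.exp_nonneg _)
          rw [← h2] at h3; exact h1.trans h3
      _ = (n.factorial : ℝ) * Real.exp (-x) := by
          rw [mul_assoc, ← Real.exp_add]; ring_nf
      _ ≤ (n.factorial : ℝ) * 1 := by
          apply mul_le_mul_of_nonneg_left (Real.exp_le_one_iff.mpr (by linarith))
            (by positivity)
      _ ≤ max 1 (n.factorial : ℝ) := by rw [mul_one]; exact le_max_right _ _

private lemma intCosC (c : ℝ) (hc : c ≠ 0) :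
    ∫ y in (0:ℝ)..1, Real.cos (c * y) = Real.sin c / c := by
  rw [intervalIntegral.integral_comp_mul_left (fun x => Real.cos x) hc]
  simp [integral_cos, div_eq_inv_mul]

private lemma intCosInt (m : ℤ) (hm : m ≠ 0) :
    ∫ y in (0:ℝ)..1, Real.cos ((m:ℝ) * Real.pi * y) = 0 := by
  have hc : (m:ℝ) * Real.pi ≠ 0 :=
    mul_ne_zero (by exact_mod_cast hm) Real.pi_ne_zero
  rw [intCosC _ hc, Real.sin_int_mul_pi, zero_div]

private lemma orthoCos (j k : ℕ) :
    ∫ y in (0:ℝ)..1, Real.cos (((j:ℝ)+1) * Real.pi * y) * Real.cos (((k:ℝ)+1) * Real.pi * y)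
      = if j = k then 1/2 else 0 := by
  have key : ∀ y : ℝ, Real.cos (((j:ℝ)+1) * Real.pi * y) * Real.cos (((k:ℝ)+1) * Real.pi * y)
      = (Real.cos ((((j:ℤ) - k : ℤ):ℝ) * Real.pi * y)
          + Real.cos ((((j:ℤ) + k + 2 : ℤ):ℝ) * Real.pi * y)) / 2 := by
    intro y
    have h1 := Real.cos_add (((j:ℝ)+1) * Real.pi * y) (((k:ℝ)+1) * Real.pi * y)
    have h2 := Real.cos_sub (((j:ℝ)+1) * Real.pi * y) (((k:ℝ)+1) * Real.pi * y)
    have e1 : ((j:ℝ)+1) * Real.pi * y + ((k:ℝ)+1) * Real.pi * y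
        = (((j:ℤ) + k + 2 : ℤ):ℝ) * Real.pi * y := by push_cast; ring
    have e2 : ((j:ℝ)+1) * Real.pi * y - ((k:ℝ)+1) * Real.pi * y
        = (((j:ℤ) - k : ℤ):ℝ) * Real.pi * y := by push_cast; ring
    rw [e1] at h1; rw [e2] at h2
    linarith
  simp_rw [key]
  rw [intervalIntegral.integral_div]
  have hi1 : IntervalIntegrable (fun y => Real.cos ((((j:ℤ) - k : ℤ):ℝ) * Real.pi * y))
      volume 0 1 := (Real.continuous_cos.comp (by continuity)).intervalIntegrable _ _
  have hi2 : IntervalIntegrable (fun y => Real.cos ((((j:ℤ) + k + 2 : ℤ):ℝ) * Real.pi * y))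
      volume 0 1 := (Real.continuous_cos.comp (by continuity)).intervalIntegrable _ _
  rw [intervalIntegral.integral_add hi1 hi2]
  rw [intCosInt ((j:ℤ) + k + 2) (by omega)]
  by_cases h : j = k
  · subst h
    simp only [sub_self, Int.cast_zero, zero_mul]
    simp
  · rw [intCosInt ((j:ℤ) - k) (by omega)]
    simp [h]

private lemma besselCos (u : ℝ → ℝ) (hu : ContinuousOn u (Set.Icc 0 1)) (F : Finset ℕ) :
    ∑ k ∈ F, (∫ y in (0:ℝ)..1, (u y)^2 * Real.cos (((k:ℝ)+1) * Real.pi * y))^2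
      ≤ (1/2) * ∫ y in (0:ℝ)..1, (u y)^4 := by
  set c : ℕ → ℝ := fun k => ∫ y in (0:ℝ)..1, (u y)^2 * Real.cos (((k:ℝ)+1) * Real.pi * y) with hc
  set g : ℝ → ℝ := fun y => ∑ k ∈ F, (2 * c k) * Real.cos (((k:ℝ)+1) * Real.pi * y) with hgdef
  have hI : Set.uIcc (0:ℝ) 1 = Set.Icc 0 1 := Set.uIcc_of_le zero_le_one
  have hu2 : ContinuousOn (fun y => (u y)^2) (Set.Icc (0:ℝ) 1) := hu.pow 2
  have hcosk : ∀ k : ℕ, Continuous (fun y => Real.cos (((k:ℝ)+1) * Real.pi * y)) :=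
    fun k => Real.continuous_cos.comp (by continuity)
  have hg : Continuous g := continuous_finset_sum _ fun k _ => continuous_const.mul (hcosk k)
  have hIf4 : IntervalIntegrable (fun y => (u y)^4) volume 0 1 := by
    apply ContinuousOn.intervalIntegrable; rw [hI]; exact hu.pow 4
  have hIfek : ∀ k : ℕ, IntervalIntegrable
      (fun y => (u y)^2 * Real.cos (((k:ℝ)+1) * Real.pi * y)) volume 0 1 := by
    intro k
    apply ContinuousOn.intervalIntegrable; rw [hI]
    exact hu2.mul (hcosk k).continuousOn
  have hIfg : IntervalIntegrable (fun y => (u y)^2 * g y) volume 0 1 := by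
    apply ContinuousOn.intervalIntegrable; rw [hI]
    exact hu2.mul hg.continuousOn
  have hIgg : IntervalIntegrable (fun y => (g y)^2) volume 0 1 :=
    (hg.pow 2).intervalIntegrable _ _
  have hfg : ∫ y in (0:ℝ)..1, (u y)^2 * g y = ∑ k ∈ F, 2 * (c k)^2 := by
    have h1 : ∀ y : ℝ, (u y)^2 * g y
        = ∑ k ∈ F, (2 * c k) * ((u y)^2 * Real.cos (((k:ℝ)+1) * Real.pi * y)) := by
      intro y; rw [hgdef]; dsimp only; rw [Finset.mul_sum]
      apply Finset.sum_congr rfl; intros; ring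
    simp_rw [h1]
    rw [intervalIntegral.integral_finset_sum (fun k _ => (hIfek k).const_mul _)]
    apply Finset.sum_congr rfl
    intro k _
    rw [intervalIntegral.integral_const_mul]
    have : (∫ (x : ℝ) in (0:ℝ)..1, u x ^ 2 * Real.cos ((↑k + 1) * Real.pi * x)) = c k := rfl
    rw [this]; ring
  have hgg : ∫ y in (0:ℝ)..1, (g y)^2 = ∑ k ∈ F, 2 * (c k)^2 := by
    have hcont2 : ∀ j k : ℕ, Continuous (fun y => ((2 * c j) * (2 * c k)) *
        (Real.cos (((j:ℝ)+1) * Real.pi * y) * Real.cos (((k:ℝ)+1) * Real.pi * y))) :=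
      fun j k => continuous_const.mul ((hcosk j).mul (hcosk k))
    have expand : ∀ y : ℝ, (g y)^2 = ∑ j ∈ F, ∑ k ∈ F, ((2 * c j) * (2 * c k)) *
        (Real.cos (((j:ℝ)+1) * Real.pi * y) * Real.cos (((k:ℝ)+1) * Real.pi * y)) := by
      intro y
      rw [hgdef]; dsimp only; rw [sq, Finset.sum_mul_sum]
      apply Finset.sum_congr rfl; intro j _
      apply Finset.sum_congr rfl; intro k _
      ring
    simp_rw [expand]
    rw [intervalIntegral.integral_finset_sum (fun j _ =>
      (continuous_finset_sum _ fun k _ => hcont2 j k).intervalIntegrable _ _)]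
    apply Finset.sum_congr rfl
    intro j hj
    rw [intervalIntegral.integral_finset_sum (fun k _ => (hcont2 j k).intervalIntegrable _ _)]
    simp_rw [intervalIntegral.integral_const_mul, orthoCos, mul_ite, mul_zero]
    rw [Finset.sum_ite_eq F j (fun k => (2 * c j) * (2 * c k) * (1/2)), if_pos hj]
    ring
  have h0 : (0:ℝ) ≤ ∫ y in (0:ℝ)..1, ((u y)^2 - g y)^2 :=
    intervalIntegral.integral_nonneg zero_le_one (fun x _ => sq_nonneg _)
  have key : ∫ y in (0:ℝ)..1, ((u y)^2 - g y)^2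
      = (∫ y in (0:ℝ)..1, (u y)^4) - 2 * (∑ k ∈ F, 2 * (c k)^2) + ∑ k ∈ F, 2 * (c k)^2 := by
    have h2 : ∀ y : ℝ, ((u y)^2 - g y)^2
        = (u y)^4 - 2 * ((u y)^2 * g y) + (g y)^2 := fun y => by ring
    simp_rw [h2]
    rw [intervalIntegral.integral_add (hIf4.sub (hIfg.const_mul 2)) hIgg,
      intervalIntegral.integral_sub hIf4 (hIfg.const_mul 2),
      intervalIntegral.integral_const_mul, hfg, hgg]
  have hS : ∑ k ∈ F, 2 * (c k)^2 = 2 * ∑ k ∈ F, (c k)^2 := by rw [Finset.mul_sum]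
  rw [key, hS] at h0
  linarith

/-- Series form of `‖S(t)B(u)‖_{Ḣ^ς} ≤ C t^{-(ς+1)/2} ‖u‖²_{L⁴}`: for every `ς ≥ 0` there is
`C > 0` such that for every `t > 0` and continuous `u : [0,1] → ℝ`,
`Σ_k (k²π²)^{ς+1} e^{-2tk²π²} (∫₀¹ u² cos(kπy) dy)² ≤ C t^{-(ς+1)} ∫₀¹ u⁴`. -/
theorem stmt6 (ς : ℝ) (hς : 0 ≤ ς) :
    ∃ C : ℝ, 0 < C ∧ ∀ t : ℝ, 0 < t → ∀ u : ℝ → ℝ, ContinuousOn u (Set.Icc 0 1) →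
      (∑' k : ℕ, ((((k:ℝ)+1)^2 * Real.pi^2) ^ (ς+1)) *
          Real.exp (-2 * t * (((k:ℝ)+1)^2 * Real.pi^2)) *
          (∫ y in (0:ℝ)..1, (u y)^2 * Real.cos (((k:ℝ)+1) * Real.pi * y))^2)
        ≤ C * t ^ (-(ς+1)) * ∫ y in (0:ℝ)..1, (u y)^4 := by
  obtain ⟨K, hK1, hK⟩ := expBound (ς + 1) (by linarith)
  refine ⟨K, lt_of_lt_of_le one_pos hK1, ?_⟩
  intro t ht u hu
  have hint : (0:ℝ) ≤ ∫ y in (0:ℝ)..1, (u y)^4 :=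
    intervalIntegral.integral_nonneg zero_le_one (fun x _ => by positivity)
  have htp : (0:ℝ) < t ^ (-(ς+1)) := Real.rpow_pos_of_pos ht _
  have hterm : ∀ k : ℕ, ((((k:ℝ)+1)^2 * Real.pi^2) ^ (ς+1)) *
      Real.exp (-2 * t * (((k:ℝ)+1)^2 * Real.pi^2)) ≤ K * t ^ (-(ς+1)) := by
    intro k
    set lam := ((k:ℝ)+1)^2 * Real.pi^2 with hlam
    have hlam0 : 0 < lam := by positivity
    have h1 : lam ^ (ς+1) = t ^ (-(ς+1)) * (t * lam) ^ (ς+1) := by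
      rw [Real.mul_rpow ht.le hlam0.le, ← mul_assoc, ← Real.rpow_add ht,
        neg_add_cancel, Real.rpow_zero, one_mul]
    have h2 : Real.exp (-2 * t * lam) = Real.exp (-2 * (t * lam)) := by ring_nf
    rw [h1, h2, mul_assoc]
    have h3 : (t * lam) ^ (ς+1) * Real.exp (-2 * (t * lam)) ≤ K :=
      hK (t * lam) (by positivity)
    calc t ^ (-(ς+1)) * ((t * lam) ^ (ς+1) * Real.exp (-2 * (t * lam)))
        ≤ t ^ (-(ς+1)) * K := mul_le_mul_of_nonneg_left h3 htp.le
      _ = K * t ^ (-(ς+1)) := mul_comm _ _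
  apply tsum_le_of_sum_le'
  · have hK0 : (0:ℝ) ≤ K := le_trans zero_le_one hK1
    exact mul_nonneg (mul_nonneg hK0 htp.le) hint
  intro F
  calc ∑ k ∈ F, ((((k:ℝ)+1)^2 * Real.pi^2) ^ (ς+1)) *
          Real.exp (-2 * t * (((k:ℝ)+1)^2 * Real.pi^2)) *
          (∫ y in (0:ℝ)..1, (u y)^2 * Real.cos (((k:ℝ)+1) * Real.pi * y))^2
      ≤ ∑ k ∈ F, (K * t ^ (-(ς+1))) *
          (∫ y in (0:ℝ)..1, (u y)^2 * Real.cos (((k:ℝ)+1) * Real.pi * y))^2 :=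
        Finset.sum_le_sum fun k _ => mul_le_mul_of_nonneg_right (hterm k) (sq_nonneg _)
    _ = (K * t ^ (-(ς+1))) * ∑ k ∈ F,
          (∫ y in (0:ℝ)..1, (u y)^2 * Real.cos (((k:ℝ)+1) * Real.pi * y))^2 :=
        (Finset.mul_sum _ _ _).symm
    _ ≤ (K * t ^ (-(ς+1))) * ((1/2) * ∫ y in (0:ℝ)..1, (u y)^4) := by
        apply mul_le_mul_of_nonneg_left (besselCos u hu F)
        exact mul_nonneg (le_trans zero_le_one hK1) htp.le
    _ ≤ K * t ^ (-(ς+1)) * ∫ y in (0:ℝ)..1, (u y)^4 := by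
        have hK0 : (0:ℝ) ≤ K * t ^ (-(ς+1)) := mul_nonneg (le_trans zero_le_one hK1) htp.le
        nlinarith
end

section
/- For every γ ∈ [0, 1/2) there exists a constant C > 0 such that for every natural number N, every t > 0 and every sequence a₁, …, a_N of real numbers, sup_{x ∈ [0,1]} | Σ_{k=1}^N a_k · e^{−t k²π²} · √2 sin(kπx) | ≤ C · t^{(2γ−1)/4} · ( Σ_{k=1}^N (k²π²)^γ a_k² )^{1/2}. -/
/-!
Weighted Cauchy–Schwarz with weights `λ_k ^ γ`, together with `|φ_k| ≤ √2`, reduces the bound to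
the heat-kernel sum `2 ∑ λ_k ^ (-γ) e^{-2tλ_k}`. Up to the factor `π ^ (-2γ)` its terms are the
values at the positive integers of the decreasing function `x ↦ x ^ (-2γ) e^{-2π²t x²}`, so the
sum is at most `∫₀^∞ x ^ (-2γ) e^{-2π²t x²} dx = ½ Γ(½ - γ) (2π²t) ^ (γ - ½)`, which is finite
precisely because `2γ < 1`.
-/

open Set MeasureTheory Real

/-- Unlike `AntitoneOn.sum_range_le_integral`, monotonicity is only required on `(0, ∞)`; this
matters for `x ^ q` with `q < 0`, which Lean sets to `0` at `x = 0`. -/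
theorem AntitoneOn.sum_range_le_integral_Ioi {f : ℝ → ℝ} (N : ℕ) (anti : AntitoneOn f (Ioi 0))
    (integrable : IntegrableOn f (Ioi 0)) (nonneg : ∀ x ∈ Ioi 0, 0 ≤ f x) :
    ∑ n ∈ Finset.range N, f ((n : ℝ) + 1) ≤ ∫ x in Ioi 0, f x := by
  have hint : ∀ n : ℕ, IntervalIntegrable f volume n ((n : ℝ) + 1) := fun n =>
    (intervalIntegrable_iff_integrableOn_Ioc_of_le (by linarith)).2
      (integrable.mono_set fun x hx => (Nat.cast_nonneg n).trans_lt hx.1)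
  calc ∑ n ∈ Finset.range N, f ((n : ℝ) + 1)
      = ∑ n ∈ Finset.range N, ∫ _ in (n : ℝ)..(n + 1), f ((n : ℝ) + 1) := by simp
    _ ≤ ∑ n ∈ Finset.range N, ∫ x in (n : ℝ)..(n + 1), f x := by
      gcongr with n
      refine intervalIntegral.integral_mono_on_of_le_Ioo (by linarith) (by simp) (hint n)
        fun x hx => anti ((Nat.cast_nonneg n).trans_lt hx.1) (mem_Ioi.2 n.cast_add_one_pos) hx.2.le
    _ = ∫ x in (0 : ℝ)..N, f x := by
      simpa using intervalIntegral.sum_integral_adjacent_intervals (a := fun n : ℕ => (n : ℝ))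
        (fun n _ => by simpa using hint n)
    _ ≤ ∫ x in Ioi 0, f x := by
      rw [intervalIntegral.integral_of_le (Nat.cast_nonneg N)]
      exact setIntegral_mono_set integrable (ae_restrict_of_forall_mem measurableSet_Ioi nonneg)
        Ioc_subset_Ioi_self.eventuallyLE

theorem sum_rpow_mul_exp_neg_mul_rpow_le {p q b : ℝ} (hp : 0 < p) (hq : -1 < q) (hq0 : q ≤ 0)
    (hb : 0 < b) (N : ℕ) :
    ∑ n ∈ Finset.range N, ((n : ℝ) + 1) ^ q * exp (-b * ((n : ℝ) + 1) ^ p) ≤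
      b ^ (-(q + 1) / p) * (1 / p) * Gamma ((q + 1) / p) := by
  rw [← integral_rpow_mul_exp_neg_mul_rpow hp hq hb]
  refine AntitoneOn.sum_range_le_integral_Ioi N (fun x hx y hy hxy => ?_)
    (integrableOn_rpow_mul_exp_neg_mul_rpow hq hp hb)
    fun x hx => mul_nonneg (rpow_nonneg (le_of_lt hx) _) (exp_pos _).le
  have hx : (0 : ℝ) < x := hx
  exact mul_le_mul (rpow_le_rpow_of_nonpos hx hxy hq0)
    (exp_le_exp.2 <| by nlinarith [rpow_le_rpow hx.le hxy hp.le]) (exp_pos _).le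
    (rpow_nonneg hx.le _)

theorem sum_dirichlet_eigenvalue_rpow_mul_exp_le {γ t : ℝ} (hγ0 : 0 ≤ γ) (hγ1 : γ < 1 / 2)
    (ht : 0 < t) (N : ℕ) :
    ∑ k ∈ Finset.range N,
        (((k : ℝ) + 1) ^ 2 * π ^ 2) ^ (-γ) * exp (-(2 * t) * (((k : ℝ) + 1) ^ 2 * π ^ 2)) ≤
      π ^ (-(2 * γ)) * (2 * π ^ 2) ^ (γ - 1 / 2) * (1 / 2) * Gamma (1 / 2 - γ) *
        t ^ (γ - 1 / 2) := by
  have hterm : ∀ k : ℕ,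
      (((k : ℝ) + 1) ^ 2 * π ^ 2) ^ (-γ) * exp (-(2 * t) * (((k : ℝ) + 1) ^ 2 * π ^ 2)) =
        π ^ (-(2 * γ)) *
          (((k : ℝ) + 1) ^ (-(2 * γ)) * exp (-(2 * π ^ 2 * t) * ((k : ℝ) + 1) ^ (2 : ℝ))) := by
    intro k
    have hsq : ∀ x : ℝ, 0 ≤ x → (x ^ 2) ^ (-γ) = x ^ (-(2 * γ)) := fun x hx => by
      rw [← rpow_natCast, ← rpow_mul hx]; push_cast; ring_nf
    rw [mul_rpow (by positivity) (by positivity), hsq _ (by positivity), hsq _ pi_pos.le,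
      rpow_two]
    ring_nf
  have key := sum_rpow_mul_exp_neg_mul_rpow_le two_pos (by linarith : -1 < -(2 * γ))
    (by linarith) (by positivity : 0 < 2 * π ^ 2 * t) N
  rw [show -(-(2 * γ) + 1) / 2 = γ - 1 / 2 by ring, show (-(2 * γ) + 1) / 2 = 1 / 2 - γ by ring,
    mul_rpow (by positivity) ht.le] at key
  rw [Finset.sum_congr rfl fun k _ => hterm k, ← Finset.mul_sum]
  exact (mul_le_mul_of_nonneg_left key (rpow_nonneg pi_pos.le (-(2 * γ)))).trans_eq (by ring)

theorem sq_exp_mul_sqrt_two_sin_div_rpow_le {lam : ℝ} (hlam : 0 < lam) (γ t θ : ℝ) :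
    (exp (-t * lam) * (√2 * sin θ)) ^ 2 / lam ^ γ ≤ 2 * (lam ^ (-γ) * exp (-(2 * t) * lam)) := by
  have hexp : exp (-t * lam) ^ 2 = exp (-(2 * t) * lam) := by
    rw [sq, ← exp_add]
    ring_nf
  rw [rpow_neg hlam.le, mul_pow, mul_pow, sq_sqrt zero_le_two, hexp, div_eq_mul_inv]
  calc _ = 2 * ((lam ^ γ)⁻¹ * exp (-(2 * t) * lam)) * sin θ ^ 2 := by ring
    _ ≤ _ := mul_le_of_le_one_right (by positivity) (sin_sq_le_one _)

theorem sum_heat_mode_sq_div_rpow_le {γ t : ℝ} (hγ0 : 0 ≤ γ) (hγ1 : γ < 1 / 2) (ht : 0 < t)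
    (N : ℕ) (x : ℝ) :
    ∑ k ∈ Finset.range N,
        (exp (-t * (((k : ℝ) + 1) ^ 2 * π ^ 2)) * (√2 * sin (((k : ℝ) + 1) * π * x))) ^ 2 /
          (((k : ℝ) + 1) ^ 2 * π ^ 2) ^ γ ≤
      2 * (π ^ (-(2 * γ)) * (2 * π ^ 2) ^ (γ - 1 / 2) * (1 / 2) * Gamma (1 / 2 - γ)) *
        t ^ (γ - 1 / 2) := by
  calc _ ≤ ∑ k ∈ Finset.range N, 2 * ((((k : ℝ) + 1) ^ 2 * π ^ 2) ^ (-γ) *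
          exp (-(2 * t) * (((k : ℝ) + 1) ^ 2 * π ^ 2))) :=
        Finset.sum_le_sum fun k _ => sq_exp_mul_sqrt_two_sin_div_rpow_le (by positivity) γ t _
    _ ≤ _ := by
      rw [← Finset.mul_sum, mul_assoc]
      exact mul_le_mul_of_nonneg_left (sum_dirichlet_eigenvalue_rpow_mul_exp_le hγ0 hγ1 ht N)
        zero_le_two

theorem abs_sum_mul_le_sqrt_mul_sqrt {ι : Type*} (s : Finset ι) (a b w : ι → ℝ)
    (hw : ∀ i ∈ s, 0 < w i) :
    |∑ i ∈ s, a i * b i| ≤ √(∑ i ∈ s, w i * a i ^ 2) * √(∑ i ∈ s, b i ^ 2 / w i) := by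
  have hwa : ∀ i ∈ s, 0 ≤ w i * a i ^ 2 := fun i hi => mul_nonneg (hw i hi).le (sq_nonneg _)
  rw [← sqrt_mul (Finset.sum_nonneg hwa)]
  refine abs_le_sqrt (Finset.sum_sq_le_sum_mul_sum_of_sq_le_mul s hwa
    (fun i hi => div_nonneg (sq_nonneg _) (hw i hi).le) fun i hi => le_of_eq ?_)
  field_simp [(hw i hi).ne']

/-- Coefficient form of `‖P_N S(t)ψ‖_{L^∞} ≤ C t^{(2γ-1)/4} ‖ψ‖_{Ḣ^γ}` for `γ ∈ [0,1/2)`. -/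
theorem stmt8 (γ : ℝ) (hγ : γ ∈ Set.Ico (0:ℝ) (1/2)) :
    ∃ C : ℝ, 0 < C ∧ ∀ (N : ℕ) (t : ℝ), 0 < t → ∀ a : ℕ → ℝ,
      (⨆ x : Set.Icc (0:ℝ) 1,
        |∑ k ∈ Finset.range N,
          a (k+1) * Real.exp (-t * (((k:ℝ)+1)^2 * Real.pi^2)) *
            (Real.sqrt 2 * Real.sin (((k:ℝ)+1) * Real.pi * (x:ℝ)))|)
      ≤ C * t ^ ((2*γ - 1)/4) *
        (∑ k ∈ Finset.range N,
          ((((k:ℝ)+1)^2 * Real.pi^2) ^ γ) * (a (k+1))^2) ^ ((1:ℝ)/2) := by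
  obtain ⟨hγ0, hγ1⟩ := hγ
  set K := π ^ (-(2 * γ)) * (2 * π ^ 2) ^ (γ - 1 / 2) * (1 / 2) * Gamma (1 / 2 - γ)
  have hK : 0 < K := by
    have := Gamma_pos_of_pos (by linarith : 0 < 1 / 2 - γ)
    positivity
  refine ⟨√(2 * K), by positivity, fun N t ht a => ciSup_le fun x => ?_⟩
  calc _ = |∑ k ∈ Finset.range N, a (k + 1) *
          (exp (-t * (((k : ℝ) + 1) ^ 2 * π ^ 2)) * (√2 * sin (((k : ℝ) + 1) * π * x)))| := by
        simp only [mul_assoc]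
    _ ≤ √(∑ k ∈ Finset.range N, (((k : ℝ) + 1) ^ 2 * π ^ 2) ^ γ * a (k + 1) ^ 2) *
          √(∑ k ∈ Finset.range N,
            (exp (-t * (((k : ℝ) + 1) ^ 2 * π ^ 2)) * (√2 * sin (((k : ℝ) + 1) * π * x))) ^ 2 /
              (((k : ℝ) + 1) ^ 2 * π ^ 2) ^ γ) :=
        abs_sum_mul_le_sqrt_mul_sqrt _ _ _ _ fun k _ => by positivity
    _ ≤ √(∑ k ∈ Finset.range N, (((k : ℝ) + 1) ^ 2 * π ^ 2) ^ γ * a (k + 1) ^ 2) *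
          √(2 * K * t ^ (γ - 1 / 2)) := by
        grw [sum_heat_mode_sq_div_rpow_le hγ0 hγ1 ht N x]
    _ = _ := by
      rw [sqrt_mul (by positivity), ← sqrt_eq_rpow, sqrt_eq_rpow (t ^ _), ← rpow_mul ht.le,
        show (γ - 1 / 2) * (1 / 2) = (2 * γ - 1) / 4 by ring]
      ring
end

section
/- For every real p ≥ 2 there exists a constant C > 0 such that for every natural number N, every t > 0 and every sequence a₁, …, a_N of real numbers, ( ∫₀¹ | Σ_{k=1}^N a_k · e^{−t k²π²} · √2 sin(kπx) |^p dx )^{1/p} ≤ C · t^{−(p−2)/(4p)} · ( Σ_{k=1}^N a_k² )^{1/2}. -/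
/-!
Write `f = ∑ aₖ e^{-tλₖ} φₖ`. Orthonormality of the modes gives `‖f‖₂ ≤ ‖a‖₂`, while
Cauchy–Schwarz together with the Gaussian sum `∑ₖ e^{-2tπ²k²} ≲ t^{-1/2}` (compared with
`∫₀^∞ e^{-cx²} dx`) gives `‖f‖_∞ ≤ t^{-1/4} ‖a‖₂`. The `Lᵖ` bound follows from the
interpolation `∫ |f|ᵖ ≤ ‖f‖_∞^{p-2} ∫ f²`.
-/

open Real MeasureTheory Finset Set

theorem integral_cos_int_mul_pi_mul {n : ℤ} (hn : n ≠ 0) :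
    ∫ x in (0:ℝ)..1, cos (n * π * x) = 0 := by
  have hnπ : (n : ℝ) * π ≠ 0 := mul_ne_zero (Int.cast_ne_zero.mpr hn) pi_ne_zero
  rw [intervalIntegral.integral_comp_mul_left (fun x => cos x) hnπ, integral_cos, mul_one,
    mul_zero, sin_int_mul_pi, sin_zero, sub_zero, smul_zero]

/-- The Dirichlet eigenfunction `φ_{k+1}`; the shift matches the `range N` indexing. -/
noncomputable def sineMode (k : ℕ) (x : ℝ) : ℝ := √2 * sin (((k:ℝ) + 1) * π * x)

theorem continuous_sineMode (k : ℕ) : Continuous (sineMode k) := by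
  unfold sineMode; fun_prop

theorem sineMode_sq_le (k : ℕ) (x : ℝ) : sineMode k x ^ 2 ≤ 2 := by
  rw [sineMode, mul_pow, sq_sqrt zero_le_two]
  exact mul_le_of_le_one_right zero_le_two (sin_sq_le_one _)

theorem integral_sineMode_mul_sineMode (j k : ℕ) :
    ∫ x in (0:ℝ)..1, sineMode j x * sineMode k x = if j = k then 1 else 0 := by
  have hprod : ∀ x, sineMode j x * sineMode k x =
      cos (((j - k : ℤ) : ℝ) * π * x) - cos (((j + k + 2 : ℤ) : ℝ) * π * x) := by
    intro x
    have h2 : √2 * √2 = 2 := mul_self_sqrt zero_le_two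
    have hsub : ((j - k : ℤ) : ℝ) * π * x = ((j:ℝ) + 1) * π * x - ((k:ℝ) + 1) * π * x := by
      push_cast; ring
    have hadd : ((j + k + 2 : ℤ) : ℝ) * π * x = ((j:ℝ) + 1) * π * x + ((k:ℝ) + 1) * π * x := by
      push_cast; ring
    rw [hsub, hadd, cos_sub, cos_add, sineMode, sineMode]
    linear_combination (sin (((j:ℝ) + 1) * π * x) * sin (((k:ℝ) + 1) * π * x)) * h2
  have hcos : ∀ n : ℤ, IntervalIntegrable (fun x => cos ((n : ℝ) * π * x)) volume 0 1 :=
    fun n => by apply Continuous.intervalIntegrable; fun_prop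
  simp_rw [hprod]
  rw [intervalIntegral.integral_sub (hcos _) (hcos _),
    integral_cos_int_mul_pi_mul (by omega : (j + k + 2 : ℤ) ≠ 0)]
  split_ifs with hjk
  · simp [hjk]
  · rw [integral_cos_int_mul_pi_mul (by omega : (j - k : ℤ) ≠ 0), sub_zero]

theorem intervalIntegral_sq_sum_eq_sum_sq {ι : Type*} [DecidableEq ι] {a b : ℝ}
    {g : ι → ℝ → ℝ} (hg : ∀ i, Continuous (g i))
    (horth : ∀ i j, ∫ x in a..b, g i x * g j x = if i = j then 1 else 0)
    (s : Finset ι) (c : ι → ℝ) :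
    ∫ x in a..b, (∑ i ∈ s, c i * g i x) ^ 2 = ∑ i ∈ s, c i ^ 2 := by
  have hexpand : ∀ x, (∑ i ∈ s, c i * g i x) ^ 2 =
      ∑ i ∈ s, ∑ j ∈ s, c i * c j * (g i x * g j x) := fun x => by
    rw [sq, sum_mul_sum]
    exact sum_congr rfl fun i _ => sum_congr rfl fun j _ => mul_mul_mul_comm _ _ _ _
  have hcont : ∀ i j, Continuous fun x => c i * c j * (g i x * g j x) :=
    fun i j => by have := hg i; have := hg j; fun_prop
  simp_rw [hexpand]
  rw [intervalIntegral.integral_finsetSum fun i _ =>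
    (continuous_finsetSum s fun j _ => hcont i j).intervalIntegrable a b]
  refine sum_congr rfl fun i hi => ?_
  rw [intervalIntegral.integral_finsetSum fun j _ => (hcont i j).intervalIntegrable a b]
  simp_rw [intervalIntegral.integral_const_mul, horth, mul_ite, mul_one, mul_zero]
  rw [sum_ite_eq, if_pos hi, sq]

theorem abs_sum_mul_sineMode_le (s : Finset ℕ) (a E : ℕ → ℝ) (x : ℝ) :
    |∑ k ∈ s, a k * E k * sineMode k x| ≤ √(∑ k ∈ s, a k ^ 2) * √(2 * ∑ k ∈ s, E k ^ 2) := by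
  rw [← sqrt_mul (sum_nonneg fun k _ => sq_nonneg (a k))]
  apply abs_le_sqrt
  simp_rw [mul_assoc]
  refine (sum_mul_sq_le_sq_mul_sq s a fun k => E k * sineMode k x).trans ?_
  gcongr
  rw [mul_sum]
  refine sum_le_sum fun k _ => ?_
  rw [mul_pow, mul_comm 2]
  exact mul_le_mul_of_nonneg_left (sineMode_sq_le k x) (sq_nonneg _)

theorem sum_range_exp_neg_mul_sq_le (N : ℕ) {c : ℝ} (hc : 0 < c) :
    ∑ k ∈ range N, exp (-c * ((k:ℝ) + 1) ^ 2) ≤ √(π / c) / 2 := by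
  have hanti : AntitoneOn (fun x : ℝ => exp (-c * x ^ 2)) (Icc 0 (0 + N)) := by
    intro x hx y _ hxy
    simp only [exp_le_exp, neg_mul, neg_le_neg_iff]
    gcongr
    exact hx.1
  calc ∑ k ∈ range N, exp (-c * ((k:ℝ) + 1) ^ 2)
      ≤ ∫ x in (0:ℝ)..0 + N, exp (-c * x ^ 2) := by
        simpa using hanti.sum_le_integral
    _ = ∫ x in Ioc 0 (N:ℝ), exp (-c * x ^ 2) := by
        rw [zero_add, intervalIntegral.integral_of_le (Nat.cast_nonneg N)]
    _ ≤ ∫ x in Ioi 0, exp (-c * x ^ 2) :=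
        setIntegral_mono_set (integrable_exp_neg_mul_sq hc).integrableOn
          (Filter.Eventually.of_forall fun _ => (exp_pos _).le) Ioc_subset_Ioi_self.eventuallyLE
    _ = √(π / c) / 2 := integral_gaussian_Ioi c

theorem sqrt_two_mul_sum_sq_exp_neg_le (N : ℕ) {t : ℝ} (ht : 0 < t) :
    √(2 * ∑ k ∈ range N, exp (-t * (((k:ℝ) + 1) ^ 2 * π ^ 2)) ^ 2) ≤ t ^ (-(1/4) : ℝ) := by
  have hsq : ∀ k : ℕ, exp (-t * (((k:ℝ) + 1) ^ 2 * π ^ 2)) ^ 2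
      = exp (-(2 * π ^ 2 * t) * ((k:ℝ) + 1) ^ 2) := fun k => by
    rw [sq, ← exp_add]; ring_nf
  have hratio : π / (2 * π ^ 2 * t) ≤ t⁻¹ := by
    rw [div_le_iff₀ (by positivity), inv_mul_eq_div, le_div_iff₀ ht]
    nlinarith [mul_pos (mul_pos pi_pos ht) (by linarith [pi_gt_three] : (0:ℝ) < 2 * π - 1)]
  calc √(2 * ∑ k ∈ range N, exp (-t * (((k:ℝ) + 1) ^ 2 * π ^ 2)) ^ 2)
      ≤ √(2 * (√(π / (2 * π ^ 2 * t)) / 2)) := by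
        simp_rw [hsq]
        gcongr
        exact sum_range_exp_neg_mul_sq_le N (by positivity)
    _ ≤ √√(t⁻¹) := by
        rw [mul_div_cancel₀ _ two_ne_zero]
        gcongr
    _ = t ^ (-(1/4) : ℝ) := by
        rw [sqrt_eq_rpow, sqrt_eq_rpow, ← rpow_neg_one, ← rpow_mul ht.le, ← rpow_mul ht.le]
        norm_num

theorem abs_rpow_le_rpow_sub_two_mul_sq {p M y : ℝ} (hp : 2 ≤ p) (hy : |y| ≤ M) :
    |y| ^ p ≤ M ^ (p - 2) * y ^ 2 := by
  have hsplit : |y| ^ p = |y| ^ (p - 2) * |y| ^ (2:ℕ) := by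
    rw [← rpow_add_natCast' (abs_nonneg y) (by push_cast; linarith)]
    push_cast; ring_nf
  rw [hsplit, sq_abs]
  gcongr

theorem intervalIntegral_rpow_abs_le {f : ℝ → ℝ} {a b p M : ℝ} (hf : Continuous f)
    (hab : a ≤ b) (hp : 2 ≤ p) (hM : ∀ x, |f x| ≤ M) :
    ∫ x in a..b, |f x| ^ p ≤ M ^ (p - 2) * ∫ x in a..b, f x ^ 2 := by
  rw [← intervalIntegral.integral_const_mul]
  refine intervalIntegral.integral_mono_on hab ?_ ?_ fun x _ =>
    abs_rpow_le_rpow_sub_two_mul_sq hp (hM x)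
  · exact (hf.abs.rpow_const fun _ => Or.inr (by linarith)).intervalIntegrable a b
  · exact (continuous_const.mul (hf.pow 2)).intervalIntegrable a b

theorem rpow_sub_two_mul_sq_rpow_one_div {p s A : ℝ} (hp : 0 < p) (hs : 0 ≤ s) (hA : 0 ≤ A) :
    ((s * A) ^ (p - 2) * A ^ 2) ^ (1 / p) = s ^ ((p - 2) / p) * A := by
  have hAp : A ^ (p - 2) * A ^ 2 = A ^ p := by
    rw [← rpow_add_natCast' hA (by push_cast; linarith)]
    push_cast; ring_nf
  rw [mul_rpow hs hA, mul_assoc, hAp, mul_rpow (rpow_nonneg hs _) (rpow_nonneg hA _),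
    ← rpow_mul hs, ← rpow_mul hA, mul_one_div, mul_one_div_cancel hp.ne', rpow_one]

/-- Coefficient form of `‖P_N S(t)ψ‖_{L^p} ≤ C t^{-(p-2)/(4p)} ‖ψ‖_{L²}` for `p ≥ 2`. -/
theorem stmt9 (p : ℝ) (hp : 2 ≤ p) :
    ∃ C : ℝ, 0 < C ∧ ∀ (N : ℕ) (t : ℝ), 0 < t → ∀ a : ℕ → ℝ,
      (∫ x in (0:ℝ)..1,
        |∑ k ∈ Finset.range N,
          a (k+1) * Real.exp (-t * (((k:ℝ)+1)^2 * Real.pi^2)) *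
            (Real.sqrt 2 * Real.sin (((k:ℝ)+1) * Real.pi * x))| ^ p) ^ (1/p)
      ≤ C * t ^ (-(p-2)/(4*p)) *
        (∑ k ∈ Finset.range N, (a (k+1))^2) ^ ((1:ℝ)/2) := by
  refine ⟨1, one_pos, fun N t ht a => ?_⟩
  set E : ℕ → ℝ := fun k => exp (-t * (((k:ℝ) + 1) ^ 2 * π ^ 2))
  set f : ℝ → ℝ := fun x => ∑ k ∈ range N, a (k + 1) * E k * sineMode k x
  set A := √(∑ k ∈ range N, a (k + 1) ^ 2)
  have hf : Continuous f :=
    continuous_finsetSum _ fun k _ => by have := continuous_sineMode k; fun_prop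
  have hsup : ∀ x, |f x| ≤ t ^ (-(1/4) : ℝ) * A := fun x => by
    rw [mul_comm]
    exact (abs_sum_mul_sineMode_le _ _ E x).trans
      (by gcongr; exact sqrt_two_mul_sum_sq_exp_neg_le N ht)
  have hE : ∀ k, E k ^ 2 ≤ 1 := fun k =>
    pow_le_one₀ (exp_pos _).le (exp_le_one_iff.mpr (by rw [neg_mul, neg_nonpos]; positivity))
  have hL2 : ∫ x in (0:ℝ)..1, f x ^ 2 ≤ A ^ 2 := by
    rw [intervalIntegral_sq_sum_eq_sum_sq continuous_sineMode integral_sineMode_mul_sineMode,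
      sq_sqrt (sum_nonneg fun k _ => sq_nonneg _)]
    exact sum_le_sum fun k _ =>
      (mul_pow _ _ 2).trans_le (mul_le_of_le_one_right (sq_nonneg _) (hE k))
  rw [← sqrt_eq_rpow]
  calc (∫ x in (0:ℝ)..1, |f x| ^ p) ^ (1 / p)
      ≤ ((t ^ (-(1/4) : ℝ) * A) ^ (p - 2) * A ^ 2) ^ (1 / p) := by
        gcongr
        · exact intervalIntegral.integral_nonneg zero_le_one fun x _ => by positivity
        · exact (intervalIntegral_rpow_abs_le hf zero_le_one hp hsup).trans (by gcongr)
    _ = 1 * t ^ (-(p - 2) / (4 * p)) * A := by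
        rw [rpow_sub_two_mul_sq_rpow_one_div (by linarith) (by positivity) (sqrt_nonneg _),
          ← rpow_mul ht.le, one_mul]
        congr 2
        ring
end
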